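/- For all nonzero real numbers a, b one has the polynomial identity −8a²b²·B₂^{a,b} = (a−b)²·X² + 2ab(a+b)·X − 3a²b² in ℝ[X]. Equivalently, since 𝓑_{a,b}^3 = B₂^{a,b}, the normalized Cayley determinant for triangular orbits is 𝓑̃_{a,b}^3 = (a−b)²X² + 2ab(a+b)X − 3a²b². -/

import Mathlib

/-- The k-th Taylor coefficient of √(1+t) at t = 0:
`c k = (−1)^(k+1)·(2k choose k)/(4^k·(2k−1))` (note `2k−1 = −1` when `k = 0`, so `c 0 = 1`). -/
noncomputable def sqrtCoeff (k : ℕ) : ℚ :=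
  (-1) ^ (k + 1) * (Nat.choose (2 * k) k : ℚ) / (4 ^ k * (2 * (k : ℚ) - 1))

/-- The polynomial `B_k^{a,b} = Σ_{u+v+w=k} c_u c_v c_w · a^{−u} b^{−v} · (a−X)^u (b−X)^v`. -/
noncomputable def Bpoly (a b : ℝ) (k : ℕ) : Polynomial ℝ :=
  ∑ u ∈ Finset.range (k + 1), ∑ v ∈ Finset.range (k + 1 - u),
    Polynomial.C ((sqrtCoeff u : ℝ) * (sqrtCoeff v : ℝ) * (sqrtCoeff (k - u - v) : ℝ)
        * a⁻¹ ^ u * b⁻¹ ^ v) *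
      (Polynomial.C a - Polynomial.X) ^ u * (Polynomial.C b - Polynomial.X) ^ v

/-- Cayley's determinant `𝓑_{a,b}^n`: for odd `n = 2m+1` it is the determinant of the
`m×m` matrix with `(i,j)` entry `B_{i+j}` (`1 ≤ i,j ≤ m`); for even `n = 2m` it is the
determinant of the `(m−1)×(m−1)` matrix with `(i,j)` entry `B_{i+j+1}` (`1 ≤ i,j ≤ m−1`). -/
noncomputable def cayleyPoly (a b : ℝ) (n : ℕ) : Polynomial ℝ :=
  if Odd n then
    Matrix.det (Matrix.of fun i j : Fin (n / 2) => Bpoly a b (i.val + j.val + 2))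
  else
    Matrix.det (Matrix.of fun i j : Fin (n / 2 - 1) => Bpoly a b (i.val + j.val + 3))

/-! Only `c₀ = 1`, `c₁ = 1/2`, `c₂ = -1/8` enter `B₂`. Writing `p = (a - X)/a`, `q = (b - X)/b`,
one gets `B₂ = -(1 + p² + q² - 2p - 2q - 2pq)/8`, and multiplying by `-8a²b²` clears the
denominators `a`, `b`. -/

open Polynomial

@[simp] lemma sqrtCoeff_zero : sqrtCoeff 0 = 1 := by norm_num [sqrtCoeff]

@[simp] lemma sqrtCoeff_one : sqrtCoeff 1 = 1 / 2 := by norm_num [sqrtCoeff]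

@[simp] lemma sqrtCoeff_two : sqrtCoeff 2 = -1 / 8 := by norm_num [sqrtCoeff, Nat.choose]

lemma cayleyPoly_three_eq (a b : ℝ) : cayleyPoly a b 3 = Bpoly a b 2 := by
  simp [cayleyPoly, show Odd 3 by decide]

lemma Bpoly_two (a b : ℝ) :
    Bpoly a b 2 =
      C (-1 / 8) * (1 + (C a⁻¹ * (C a - X)) ^ 2 + (C b⁻¹ * (C b - X)) ^ 2
        - 2 * (C a⁻¹ * (C a - X)) - 2 * (C b⁻¹ * (C b - X))
        - 2 * (C a⁻¹ * (C a - X)) * (C b⁻¹ * (C b - X))) := by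
  apply Polynomial.funext
  intro x
  simp only [Bpoly, Finset.sum_range_succ, Finset.sum_range_zero, Nat.reduceSub, Nat.sub_self,
    Nat.sub_zero, sqrtCoeff_zero, sqrtCoeff_one, sqrtCoeff_two]
  simp only [eval_mul, eval_add, eval_sub, eval_pow, eval_C, eval_X, eval_one,
    eval_ofNat, eval_zero]
  push_cast
  ring

/-- The explicit formula for `n = 3`: `𝓑_{a,b}^3 = B₂^{a,b}` and the normalized Cayley
determinant is `𝓑̃_{a,b}^3 = −8a²b²·B₂^{a,b} = (a−b)²X² + 2ab(a+b)X − 3a²b²`. -/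
theorem cayleyPoly_three (a b : ℝ) (ha : a ≠ 0) (hb : b ≠ 0) :
    cayleyPoly a b 3 = Bpoly a b 2 ∧
    Polynomial.C (-8 * a ^ 2 * b ^ 2) * Bpoly a b 2 =
      Polynomial.C ((a - b) ^ 2) * Polynomial.X ^ 2 +
        Polynomial.C (2 * a * b * (a + b)) * Polynomial.X -
        Polynomial.C (3 * a ^ 2 * b ^ 2) := by
  refine ⟨cayleyPoly_three_eq a b, ?_⟩
  rw [Bpoly_two]
  apply Polynomial.funext
  intro x
  simp only [eval_mul, eval_add, eval_sub, eval_pow, eval_C, eval_X, eval_one, eval_ofNat]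
  field_simp
  ring
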